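/- Let B be a finite list of positive integral bids in [0,M]^n ∩ ℤ^n (each with positive integer weight), and consider demand along the line L_1 = {(z, M, ..., M) : 0 ≤ z ≤ M} perturbed to be non-marginal. The quantity of good 1 demanded, as a function of z, equals the total weight of bids b with b_1 > z (approximately; precisely, at the non-marginal point (z + 1/2, M+1/2, ..., M+1/2) each bid b demands good 1 iff b_1 > z and is rejected otherwise). Hence this demand function is monotonically non-increasing in z and changes value only at integers. -/

import Mathlib

/-!
Above the price `M + 1/2` on every good but the first, an integral bid bounded by `M` gets
negative utility from all those goods, so it demands good 1 exactly when good 1 has positive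
utility and is rejected otherwise. At the price `z + 1/2` of good 1, and since bids are integral,
this is the condition `z < b₁`; the demanded quantity is then a sum of nonnegative weights over
a set of bids that shrinks as `z` grows.
-/

/-- Utility of a bid `b` at price `p` for good `i`, where `none` is the reject good 0. -/
def util {n : ℕ} (b : Fin n → ℤ) (p : Fin n → ℝ) : Option (Fin n) → ℝ
  | Option.none => 0
  | Option.some k => (b k : ℝ) - p k

/-- Bid `b` uniquely demands good `i` at price `p`. -/
def UDem {n : ℕ} (b : Fin n → ℤ) (p : Fin n → ℝ) (i : Option (Fin n)) : Prop :=
  ∀ j, j ≠ i → util b p j < util b p i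

/-- The non-marginal price `(z + 1/2, M + 1/2, ..., M + 1/2)`. -/
noncomputable def P (n : ℕ) (M z : ℤ) : Fin n → ℝ := fun k =>
  if k.val = 0 then (z : ℝ) + 1 / 2 else (M : ℝ) + 1 / 2

section Demand

variable {n : ℕ} {b : Fin n → ℤ} {p : Fin n → ℝ}

lemma util_some_neg {k : Fin n} (h : (b k : ℝ) < p k) : util b p (some k) < 0 :=
  sub_neg.mpr h

lemma uDem_none_iff : UDem b p none ↔ ∀ k, (b k : ℝ) < p k := by
  refine ⟨fun h k => sub_neg.mp (h (some k) (Option.some_ne_none k)), fun h j hj => ?_⟩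
  obtain ⟨k, rfl⟩ := Option.ne_none_iff_exists'.mp hj
  exact util_some_neg (h k)

lemma uDem_some_iff_of_lt_of_ne {k₀ : Fin n} (hp : ∀ k ≠ k₀, (b k : ℝ) < p k) :
    UDem b p (some k₀) ↔ p k₀ < b k₀ := by
  refine ⟨fun h => sub_pos.mp (h none (Option.some_ne_none k₀).symm), fun h j hj => ?_⟩
  have hpos : 0 < util b p (some k₀) := sub_pos.mpr h
  cases j with
  | none => exact hpos
  | some k => exact (util_some_neg (hp k fun e => hj (congrArg some e))).trans hpos

end Demand

lemma P_zero (n : ℕ) (hn : 0 < n) (M z : ℤ) : P n M z ⟨0, hn⟩ = z + 1 / 2 := if_pos rfl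

lemma lt_P_of_ne_zero {n : ℕ} {M z b : ℤ} {k : Fin n} (hk : k.val ≠ 0) (hb : b ≤ M) :
    (b : ℝ) < P n M z k := by
  have : (b : ℝ) ≤ M := by exact_mod_cast hb
  simp only [P, if_neg hk]
  linarith

lemma Int.cast_add_half_lt_iff {z b : ℤ} : (z : ℝ) + 1 / 2 < b ↔ z < b := by
  constructor
  · intro h
    have : (z : ℝ) < b := by linarith
    exact_mod_cast this
  · intro h
    have : (z : ℝ) + 1 ≤ b := by exact_mod_cast h
    linarith

lemma antitone_sum_filter_lt {ι α R : Type*} [LinearOrder α] [AddCommMonoid R] [PartialOrder R]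
    [IsOrderedAddMonoid R] {s : Finset ι} {f : ι → α} {w : ι → R} (hw : ∀ i ∈ s, 0 ≤ w i) :
    Antitone fun z => ∑ i ∈ s.filter (fun i => z < f i), w i := by
  intro z₁ z₂ hz
  refine Finset.sum_le_sum_of_subset_of_nonneg ?_ fun i hi _ => hw i (Finset.mem_filter.mp hi).1
  exact Finset.monotone_filter_right s fun _ _ => hz.trans_lt

theorem stmt_16_general (n : ℕ) (hn : 0 < n) (M : ℤ) (ι : Type*)
    (B : Finset ι) (bid : ι → Fin n → ℤ) (w : ι → ℤ)
    (hbounds : ∀ a ∈ B, ∀ k, 0 ≤ bid a k ∧ bid a k ≤ M)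
    (hw : ∀ a ∈ B, 0 < w a) :
    (∀ z : ℤ, ∀ a ∈ B,
      (UDem (bid a) (P n M z) (some ⟨0, hn⟩) ↔ z < bid a ⟨0, hn⟩) ∧
      (bid a ⟨0, hn⟩ ≤ z → UDem (bid a) (P n M z) none)) ∧
    Antitone (fun z : ℤ => ∑ a ∈ B.filter (fun a => z < bid a ⟨0, hn⟩), w a) := by
  refine ⟨fun z a ha => ?_, antitone_sum_filter_lt fun a ha => (hw a ha).le⟩
  have hoff : ∀ k ≠ ⟨0, hn⟩, (bid a k : ℝ) < P n M z k := fun k hk =>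
    lt_P_of_ne_zero (fun h => hk (Fin.ext h)) (hbounds a ha k).2
  refine ⟨(uDem_some_iff_of_lt_of_ne hoff).trans ?_, fun hz => uDem_none_iff.mpr fun k => ?_⟩
  · rw [P_zero, Int.cast_add_half_lt_iff]
  · by_cases hk : k = ⟨0, hn⟩
    · rw [hk, P_zero]
      have : (bid a ⟨0, hn⟩ : ℝ) ≤ z := by exact_mod_cast hz
      linarith
    · exact hoff k hk

theorem stmt_16 (n : ℕ) (hn : 0 < n) (M : ℤ) (ι : Type*) [DecidableEq ι]
    (B : Finset ι) (bid : ι → Fin n → ℤ) (w : ι → ℤ)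
    (hbounds : ∀ a ∈ B, ∀ k, 0 ≤ bid a k ∧ bid a k ≤ M)
    (hw : ∀ a ∈ B, 0 < w a) :
    (∀ z : ℤ, ∀ a ∈ B,
      (UDem (bid a) (P n M z) (some ⟨0, hn⟩) ↔ z < bid a ⟨0, hn⟩) ∧
      (bid a ⟨0, hn⟩ ≤ z → UDem (bid a) (P n M z) none)) ∧
    Antitone (fun z : ℤ => ∑ a ∈ B.filter (fun a => z < bid a ⟨0, hn⟩), w a) :=
  stmt_16_general n hn M ι B bid w hbounds hw
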